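/- arXiv:2505.19711 — 4 statements merged into one kernel-verified Lean document; each statement's English description precedes it below -/
import Mathlib

section
/- For every potential b : ℕ → ℝ there exists a kernel w : ℕ × ℕ → ℝ satisfying the discrete Goursat problem — w_{0,t} = 0 for all t ≥ 0; w_{n,s} = 0 whenever s < n; w_{n,n} = −Σ_{k=1}^{n} b_k for all n ≥ 1; and w_{n,s+1} + w_{n,s−1} − w_{n+1,s} − w_{n−1,s} + b_n w_{n,s} = 0 for all n ≥ 1 and s > n — such that for every control f : ℕ → ℝ and all n ≥ 0, t ≥ 0 the solution admits the discrete d'Alembert representation u^f_{n,t} = f_{t−n} + Σ_{s=n}^{t−1} w_{n,s} f_{t−s−1}, where f_{t−n} is interpreted as 0 when t < n and the sum is empty when t−1 < n. -/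
/-- `sol b f t n` is the solution `u^f_{n,t}` of the discrete Schrödinger dynamical system
with potential `b` and boundary control `f`:
`u_{n,t+1} + u_{n,t-1} - u_{n+1,t} - u_{n-1,t} + b_n u_{n,t} = 0` for `n ≥ 1`, `t ≥ 0`,
`u_{n,-1} = u_{n,0} = 0` for `n ≥ 1`, and `u_{0,t} = f_t` for `t ≥ 0`
(the first argument is the time `t`, the second the space variable `n`). -/
noncomputable def sol (b f : ℕ → ℝ) : ℕ → ℕ → ℝ
  | 0, n => if n = 0 then f 0 else 0
  | 1, n => if n = 0 then f 1 else
      sol b f 0 (n + 1) + sol b f 0 (n - 1) - b n * sol b f 0 n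
  | (t + 2), n => if n = 0 then f (t + 2) else
      sol b f (t + 1) (n + 1) + sol b f (t + 1) (n - 1) - b n * sol b f (t + 1) n - sol b f t n

lemma sol_zero' (b f : ℕ → ℝ) (n : ℕ) : sol b f 0 n = if n = 0 then f 0 else 0 := rfl

lemma sol_one' (b f : ℕ → ℝ) (n : ℕ) : sol b f 1 n = if n = 0 then f 1 else
    sol b f 0 (n + 1) + sol b f 0 (n - 1) - b n * sol b f 0 n := rfl

lemma sol_step (b f : ℕ → ℝ) (t n : ℕ) : sol b f (t + 2) n = if n = 0 then f (t + 2) else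
    sol b f (t + 1) (n + 1) + sol b f (t + 1) (n - 1) - b n * sol b f (t + 1) n - sol b f t n := rfl

lemma sol_linear (b h g : ℕ → ℝ) (c : ℝ) :
    ∀ t n, sol b (fun s => c * h s + g s) t n = c * sol b h t n + sol b g t n := by
  intro t
  induction t using Nat.twoStepInduction with
  | zero => intro n; by_cases hn : n = 0 <;> simp [sol, hn]
  | one =>
    intro n; by_cases hn : n = 0
    · simp [sol, hn]
    · rw [sol_one', sol_one', sol_one', if_neg hn, if_neg hn, if_neg hn,
        sol_zero', sol_zero', sol_zero', sol_zero', sol_zero', sol_zero',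
        sol_zero', sol_zero', sol_zero']
      split_ifs <;> ring
  | more t ih2 ih1 =>
    intro n; by_cases hn : n = 0
    · simp [sol, hn]
    · rw [sol_step, sol_step, sol_step, if_neg hn, if_neg hn, if_neg hn,
        ih1, ih1, ih1, ih2]
      ring

lemma sol_vanish (b f : ℕ → ℝ) : ∀ t n, t < n → sol b f t n = 0 := by
  intro t
  induction t using Nat.twoStepInduction with
  | zero => intro n hn; rw [sol_zero', if_neg (by omega)]
  | one =>
    intro n hn
    rw [sol_one', if_neg (by omega), sol_zero', sol_zero', sol_zero',
      if_neg (by omega), if_neg (by omega), if_neg (by omega)]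
    ring
  | more t ih2 ih1 =>
    intro n hn
    rw [sol_step, if_neg (by omega), ih1 _ (by omega), ih1 _ (by omega),
      ih1 _ (by omega), ih2 _ (by omega)]
    ring

noncomputable def deltaCtrl : ℕ → ℝ := fun s => if s = 0 then 1 else 0

lemma sol_delta_zero (b : ℕ → ℝ) (t : ℕ) : sol b deltaCtrl t 0 = if t = 0 then 1 else 0 := by
  match t with
  | 0 => simp [sol, deltaCtrl]
  | 1 => simp [sol, deltaCtrl]
  | (t + 2) => simp [sol, deltaCtrl]

lemma sol_delta_diag (b : ℕ → ℝ) : ∀ n, sol b deltaCtrl n n = 1 := by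
  intro n
  induction n using Nat.twoStepInduction with
  | zero => simp [sol, deltaCtrl]
  | one => norm_num [sol, deltaCtrl]
  | more n _ ih1 =>
    have h1 : n + 2 - 1 = n + 1 := rfl
    rw [sol_step, if_neg (by omega), h1, ih1, sol_vanish b _ (n+1) (n+3) (by omega),
      sol_vanish b _ (n+1) (n+2) (by omega), sol_vanish b _ n (n+2) (by omega)]
    ring

lemma sol_delta_subdiag (b : ℕ → ℝ) :
    ∀ n, sol b deltaCtrl (n + 2) (n + 1) = -∑ k ∈ Finset.Icc 1 (n + 1), b k := by
  intro n
  induction n with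
  | zero =>
    have h1 : (1:ℕ) - 1 = 0 := rfl
    rw [sol_step, if_neg (by omega), h1, sol_vanish b _ 1 2 (by omega),
      sol_delta_zero, sol_delta_diag, sol_vanish b _ 0 1 (by omega)]
    norm_num
  | succ n ih =>
    have h1 : n + 2 - 1 = n + 1 := rfl
    rw [sol_step, if_neg (by omega), h1, ih, sol_vanish b _ (n+2) (n+3) (by omega),
      sol_delta_diag, sol_vanish b _ (n+1) (n+2) (by omega),
      Finset.sum_Icc_succ_top (by omega : (1:ℕ) ≤ n + 2)]
    ring

lemma sol_shift (b f g : ℕ → ℝ) (h0 : f 0 = 0) (hg : ∀ s, g s = f (s + 1)) :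
    ∀ t n, sol b f (t + 1) n = sol b g t n := by
  intro t
  induction t using Nat.strong_induction_on with
  | _ t ih =>
    match t with
    | 0 =>
      intro n; by_cases hn : n = 0
      · simp [sol, hn, hg]
      · rw [sol_one' b f n, if_neg hn]
        simp [sol_zero', h0, hn]
    | 1 =>
      intro n; by_cases hn : n = 0
      · simp [sol, hn, hg]
      · have e := ih 0 (by omega)
        simp only [Nat.zero_add] at e
        rw [sol_step b f 0 n, if_neg hn, e, e, e, sol_zero' b f n, if_neg hn,
          sol_one' b g n, if_neg hn]
        ring
    | (t + 2) =>
      intro n; by_cases hn : n = 0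
      · rw [sol_step b f (t+1) n, if_pos hn, sol_step b g t n, if_pos hn, hg]
      · rw [sol_step b f (t+1) n, if_neg hn, sol_step b g t n, if_neg hn,
          ih (t + 1) (by omega), ih (t + 1) (by omega), ih (t + 1) (by omega),
          ih t (by omega)]

lemma sol_superpose (b : ℕ → ℝ) :
    ∀ t (f : ℕ → ℝ) n,
      sol b f t n = ∑ τ ∈ Finset.range (t + 1), f τ * sol b deltaCtrl (t - τ) n := by
  intro t
  induction t with
  | zero =>
    intro f n
    by_cases hn : n = 0 <;> simp [sol, deltaCtrl, hn]
  | succ t ih =>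
    intro f n
    set h : ℕ → ℝ := fun s => f s - f 0 * deltaCtrl s with hh
    have hf : f = fun s => f 0 * deltaCtrl s + h s := by
      funext s; simp [hh]
    have h0 : h 0 = 0 := by simp [hh, deltaCtrl]
    have hstep : ∀ s, h (s + 1) = f (s + 1) := by
      intro s; simp [hh, deltaCtrl]
    calc sol b f (t + 1) n = sol b (fun s => f 0 * deltaCtrl s + h s) (t + 1) n := by
          rw [← hf]
      _ = f 0 * sol b deltaCtrl (t + 1) n + sol b h (t + 1) n := sol_linear b _ _ _ _ _
      _ = f 0 * sol b deltaCtrl (t + 1) n + sol b (fun s => h (s + 1)) t n := by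
          rw [sol_shift b h _ h0 (fun s => rfl)]
      _ = f 0 * sol b deltaCtrl (t + 1) n
          + ∑ τ ∈ Finset.range (t + 1), h (τ + 1) * sol b deltaCtrl (t - τ) n := by
          rw [ih]
      _ = ∑ τ ∈ Finset.range (t + 2), f τ * sol b deltaCtrl (t + 1 - τ) n := by
          rw [Finset.sum_range_succ' (fun τ => f τ * sol b deltaCtrl (t + 1 - τ) n) (t + 1)]
          simp only [Nat.succ_sub_succ, Nat.sub_zero, hstep]
          ring

/-- Discrete d'Alembert representation of the solution via a Goursat kernel. -/
theorem goursat_representation (b : ℕ → ℝ) :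
    ∃ w : ℕ → ℕ → ℝ,
      (∀ t, w 0 t = 0) ∧
      (∀ n s, s < n → w n s = 0) ∧
      (∀ n, 1 ≤ n → w n n = -∑ k ∈ Finset.Icc 1 n, b k) ∧
      (∀ n, 1 ≤ n → ∀ s, n < s →
        w n (s + 1) + w n (s - 1) - w (n + 1) s - w (n - 1) s + b n * w n s = 0) ∧
      (∀ f : ℕ → ℝ, ∀ n t : ℕ,
        sol b f t n = (if n ≤ t then f (t - n) else 0) +
          ∑ s ∈ Finset.Ico n t, w n s * f (t - s - 1)) := by
  set w : ℕ → ℕ → ℝ := fun n s => if s < n then 0 else sol b deltaCtrl (s + 1) n with hw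
  have hw0 : ∀ t, w 0 t = 0 := by
    intro t
    simp only [hw, Nat.not_lt_zero, if_false, sol_delta_zero, Nat.succ_ne_zero, if_neg]
  have hwlt : ∀ n s, s < n → w n s = 0 := by
    intro n s hs; simp only [hw, if_pos hs]
  have hdiag : ∀ n, 1 ≤ n → w n n = -∑ k ∈ Finset.Icc 1 n, b k := by
    intro n hn
    match n, hn with
    | (m + 1), _ =>
      simp only [hw, lt_irrefl, if_false]
      exact sol_delta_subdiag b m
  refine ⟨w, hw0, hwlt, hdiag, ?_, ?_⟩
  · intro n hn s hs
    have hn0 : n ≠ 0 := by omega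
    have hs1 : s - 1 + 1 = s := by omega
    rw [show w n (s + 1) = sol b deltaCtrl (s + 2) n by
        simp only [hw]; rw [if_neg (by omega)],
      show w n (s - 1) = sol b deltaCtrl s n by
        simp only [hw]; rw [if_neg (by omega), hs1],
      show w (n + 1) s = sol b deltaCtrl (s + 1) (n + 1) by
        simp only [hw]; rw [if_neg (by omega)],
      show w (n - 1) s = sol b deltaCtrl (s + 1) (n - 1) by
        simp only [hw]; rw [if_neg (by omega)],
      show w n s = sol b deltaCtrl (s + 1) n by
        simp only [hw]; rw [if_neg (by omega)],
      sol_step b deltaCtrl s n, if_neg hn0]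
    ring
  · intro f n t
    rw [sol_superpose b t f n]
    have key : ∀ τ ∈ Finset.range (t + 1),
        f τ * sol b deltaCtrl (t - τ) n
          = w n (t - τ - 1) * f (t - (t - τ - 1) - 1)
            + (if t - τ = n then f τ else 0) := by
      intro τ hτ
      rw [Finset.mem_range] at hτ
      have hτt : τ ≤ t := by omega
      have hft : t - (t - τ - 1) - 1 = if t - τ = 0 then t - 1 else τ := by
        split_ifs <;> omega
      rcases lt_trichotomy (t - τ) n with h | h | h
      · rw [sol_vanish b _ _ _ h, hwlt n _ (by omega), if_neg (by omega)]
        ring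
      · have hz : w n (t - τ - 1) = 0 := by
          rcases Nat.eq_zero_or_pos n with h0 | h0
          · simp only [hw, h0, Nat.not_lt_zero, if_false]
            rw [show t - τ - 1 + 1 = 1 by omega, sol_delta_zero, if_neg (by omega)]
          · exact hwlt n _ (by omega)
        rw [hz, h, sol_delta_diag, if_pos rfl]
        ring
      · have h1 : t - τ - 1 + 1 = t - τ := by omega
        have h2 : ¬ (t - τ - 1 < n) := by omega
        simp only [hw, if_neg h2, h1, hft, if_neg (by omega : ¬ t - τ = 0),
          if_neg (by omega : ¬ t - τ = n)]
        ring
    rw [Finset.sum_congr rfl key, Finset.sum_add_distrib, add_comm]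
    congr 1
    · -- boundary part
      by_cases hnt : n ≤ t
      · rw [if_pos hnt,
          Finset.sum_eq_single (t - n)
            (fun τ hτ hne => by
              rw [Finset.mem_range] at hτ; rw [if_neg (by omega)])
            (fun habs => absurd (Finset.mem_range.mpr (by omega)) habs),
          if_pos (by omega)]
      · rw [if_neg hnt]
        apply Finset.sum_eq_zero
        intro τ hτ
        rw [Finset.mem_range] at hτ
        rw [if_neg (by omega)]
    · -- kernel part
      rw [Finset.sum_range_succ]
      have hlast : w n (t - t - 1) * f (t - (t - t - 1) - 1) = 0 := by
        have : t - t - 1 = 0 := by omega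
        rw [this]
        have : w n 0 = 0 := by
          rcases Nat.eq_zero_or_pos n with h0 | h0
          · rw [h0, hw0]
          · exact hwlt n 0 h0
        rw [this]; ring
      rw [hlast, add_zero]
      have refl1 : ∀ τ ∈ Finset.range t,
          w n (t - τ - 1) * f (t - (t - τ - 1) - 1)
            = (fun s => w n s * f (t - s - 1)) (t - 1 - τ) := by
        intro τ hτ
        rw [Finset.mem_range] at hτ
        have e1 : t - τ - 1 = t - 1 - τ := by omega
        rw [e1]
      rw [Finset.sum_congr rfl refl1,
        Finset.sum_range_reflect (fun s => w n s * f (t - s - 1)) t]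
      rw [Finset.range_eq_Ico]
      symm
      apply Finset.sum_subset
      · intro x hx
        rw [Finset.mem_Ico] at hx ⊢
        omega
      · intro x hx hnx
        rw [Finset.mem_Ico] at hx hnx
        rw [hwlt n x (by omega)]
        ring
end

section
/- For every potential b : ℕ → ℝ and every T ≥ 1, the control operator W^T : ℝ^T → ℝ^T defined by W^T(f_0,…,f_{T−1}) = (u^f_{1,T}, u^f_{2,T}, …, u^f_{T,T}) (where f is extended by f_t = 0 for t ≥ T) is a linear bijection; equivalently, for every a ∈ ℝ^T there exists a unique control f : ℕ → ℝ with f_t = 0 for t ≥ T such that u^f_{n,T} = a_n for all n = 1,…,T. -/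
lemma sol_boundary (b f : ℕ → ℝ) (t : ℕ) : sol b f t 0 = f t := by
  match t with
  | 0 => simp [sol]
  | 1 => simp [sol]
  | (t + 2) => simp [sol]

/-- `sol b f t n` only depends on the values `f s` for `s + n ≤ t`. -/
lemma sol_congr (b f g : ℕ → ℝ) : ∀ t n, (∀ s, s + n ≤ t → f s = g s) →
    sol b f t n = sol b g t n := by
  intro t
  induction t using Nat.twoStepInduction with
  | zero =>
    intro n H
    by_cases hn : n = 0
    · simp only [sol, hn, if_pos]; exact H 0 (by omega)
    · simp only [sol]; rw [if_neg hn, if_neg hn]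
  | one =>
    intro n H
    by_cases hn : n = 0
    · simp only [sol, hn, if_pos]; exact H 1 (by omega)
    · simp only [sol]
      rw [if_neg hn, if_neg hn, if_neg (by omega : ¬ n + 1 = 0),
        if_neg (by omega : ¬ n + 1 = 0), if_neg hn, if_neg hn]
      by_cases h : n - 1 = 0
      · rw [if_pos h, if_pos h, H 0 (by omega)]
      · rw [if_neg h, if_neg h]
  | more t IH0 IH1 =>
    intro n H
    by_cases hn : n = 0
    · simp only [sol, hn, if_pos]; exact H (t+2) (by omega)
    · simp only [sol]
      rw [if_neg hn, if_neg hn,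
        IH1 (n+1) (fun s hs => H s (by omega)),
        IH1 (n-1) (fun s hs => H s (by omega)),
        IH1 n (fun s hs => H s (by omega)),
        IH0 n (fun s hs => H s (by omega))]

lemma sol_add (b f g : ℕ → ℝ) : ∀ t n,
    sol b (fun s => f s + g s) t n = sol b f t n + sol b g t n := by
  intro t
  induction t using Nat.twoStepInduction with
  | zero => intro n; simp only [sol]; split <;> simp
  | one =>
    intro n
    by_cases hn : n = 0
    · simp only [sol, hn, if_pos]
    · simp only [sol]
      rw [if_neg hn, if_neg hn, if_neg hn]
      by_cases h1 : n = 1 <;> by_cases h2 : n + 1 = 0 <;>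
        simp_all <;> split_ifs <;> ring
  | more t IH0 IH1 =>
    intro n
    by_cases hn : n = 0
    · simp only [sol, hn, if_pos]
    · simp only [sol]
      rw [if_neg hn, if_neg hn, if_neg hn, IH1 (n+1), IH1 (n-1), IH1 n, IH0 n]
      ring

lemma sol_sub (b f g : ℕ → ℝ) (t n : ℕ) :
    sol b (fun s => f s - g s) t n = sol b f t n - sol b g t n := by
  have := sol_add b (fun s => f s - g s) g t n
  simp only [sub_add_cancel] at this
  linarith

/-- diagonal values: if `f` vanishes below `t - n`, then `u_{n,t} = f_{t-n}`. -/
lemma sol_delta (b f : ℕ → ℝ) : ∀ t n, 1 ≤ n → n ≤ t →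
    (∀ s, s < t - n → f s = 0) → sol b f t n = f (t - n) := by
  intro t
  induction t using Nat.twoStepInduction with
  | zero => intro n h1 h2 _; omega
  | one =>
    intro n h1 h2 H
    have hn : n = 1 := by omega
    subst hn
    norm_num [sol]
  | more t IH0 IH1 =>
    intro n h1 h2 H
    simp only [sol]
    rw [if_neg (by omega)]
    have hA : sol b f (t+1) (n+1) = 0 := by
      by_cases h : n + 1 ≤ t + 1
      · rw [IH1 (n+1) (by omega) h (fun s hs => H s (by omega))]
        exact H _ (by omega)
      · exact sol_vanish b f _ _ (by omega)
    have hC : sol b f (t+1) n = 0 := by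
      by_cases h : n ≤ t + 1
      · rw [IH1 n h1 h (fun s hs => H s (by omega))]
        exact H _ (by omega)
      · exact sol_vanish b f _ _ (by omega)
    have hD : sol b f t n = 0 := by
      by_cases h : n ≤ t
      · rw [IH0 n h1 h (fun s hs => H s (by omega))]
        exact H _ (by omega)
      · exact sol_vanish b f _ _ (by omega)
    have hB : sol b f (t+1) (n-1) = f (t + 2 - n) := by
      by_cases h : n = 1
      · subst h; simpa using sol_boundary b f (t+1)
      · rw [IH1 (n-1) (by omega) (by omega) (fun s hs => H s (by omega))]
        congr 1; omega
    rw [hA, hB, hC, hD]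
    ring

/-- the control constructed by triangular back-substitution -/
noncomputable def ctrl (b A : ℕ → ℝ) (T : ℕ) : ℕ → ℝ
  | k => if k < T then
      A k - sol b (fun s => if h : s < k then ctrl b A T s else 0) T (T - k)
    else 0
  decreasing_by exact h

lemma sol_ctrl (b A : ℕ → ℝ) (T : ℕ) (n : ℕ) (hn : n < T) :
    sol b (ctrl b A T) T (n + 1) = A (T - 1 - n) := by
  set k := T - 1 - n with hk
  have hkT : k < T := by omega
  have hTk : T - k = n + 1 := by omega
  set low : ℕ → ℝ := fun s => if h : s < k then ctrl b A T s else 0 with hlow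
  set d : ℕ → ℝ := fun s => if s = k then ctrl b A T k else 0 with hd
  have hctrl : ctrl b A T k = A k - sol b low T (T - k) := by
    rw [ctrl]; rw [if_pos hkT]
  have h1 : sol b (ctrl b A T) T (n + 1) = sol b (fun s => low s + d s) T (n + 1) := by
    apply sol_congr
    intro s hs
    have hsk : s ≤ k := by omega
    by_cases h : s < k
    · simp only [hlow, hd]; rw [dif_pos h, if_neg (by omega), add_zero]
    · have hek : s = k := by omega
      simp only [hlow, hd]; rw [dif_neg h, if_pos hek, zero_add, hek]
  have h2 : sol b d T (n + 1) = d (T - (n + 1)) := by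
    apply sol_delta b d T (n+1) (by omega) (by omega)
    intro s hs
    simp only [hd]; rw [if_neg (by omega)]
  have hTk2 : T - (n + 1) = k := by omega
  rw [h1, sol_add, h2, hTk2]
  simp only [hd, if_pos rfl]
  rw [hctrl, hTk]
  ring

/-- Controllability: for every target `a` there is a unique control `f` supported in
`{0, …, T-1}` with `u^f_{n,T} = a_n` for `n = 1, …, T`. -/
theorem controllability (b : ℕ → ℝ) (T : ℕ) (hT : 1 ≤ T) (a : Fin T → ℝ) :
    ∃! f : ℕ → ℝ, (∀ t, T ≤ t → f t = 0) ∧ ∀ n : Fin T, sol b f T ((n : ℕ) + 1) = a n := by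
  set A : ℕ → ℝ := fun m => if h : T - 1 - m < T then a ⟨T - 1 - m, h⟩ else 0 with hA
  set f : ℕ → ℝ := ctrl b A T with hf
  have hsupp : ∀ t, T ≤ t → f t = 0 := by
    intro t ht
    rw [hf, ctrl, if_neg (by omega)]
  have hsol : ∀ n : Fin T, sol b f T ((n : ℕ) + 1) = a n := by
    intro n
    rw [hf, sol_ctrl b A T n n.isLt, hA]
    have h1 : T - 1 - (T - 1 - (n : ℕ)) = (n : ℕ) := by omega
    simp only [h1]
    rw [dif_pos n.isLt]
  refine ⟨f, ⟨hsupp, hsol⟩, ?_⟩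
  intro g ⟨hg0, hg1⟩
  funext k
  induction k using Nat.strong_induction_on with
  | _ k IH =>
    by_cases hk : k < T
    · set n : ℕ := T - 1 - k with hn
      have hnT : n < T := by omega
      have e1 : sol b g T (n + 1) = a ⟨n, hnT⟩ := hg1 ⟨n, hnT⟩
      have e2 : sol b f T (n + 1) = a ⟨n, hnT⟩ := hsol ⟨n, hnT⟩
      have e3 : sol b (fun s => g s - f s) T (n + 1) = 0 := by
        rw [sol_sub, e1, e2]; ring
      set d : ℕ → ℝ := fun s => if s ≤ k then g s - f s else 0 with hd
      have e4 : sol b d T (n + 1) = 0 := by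
        rw [sol_congr b d (fun s => g s - f s) T (n+1) ?_]
        · exact e3
        · intro s hs
          simp [hd, (by omega : s ≤ k)]
      have e5 : sol b d T (n + 1) = d (T - (n + 1)) := by
        apply sol_delta b d T (n+1) (by omega) (by omega)
        intro s hs
        have hsk : s < k := by omega
        simp [hd, hsk.le, IH s hsk]
      have hTk : T - (n + 1) = k := by omega
      rw [e5, hTk] at e4
      simp only [hd, le_refl, if_pos] at e4
      linarith
    · rw [hg0 k (by omega), hsupp k (by omega)]
end

section
/- For every potential b : ℕ → ℝ, every T ≥ 1, and all controls f, g : ℕ → ℝ with f_t = g_t = 0 for t ≥ T, the connecting form admits the representation in terms of the response vector: Σ_{n=1}^{T} u^f_{n,T} u^g_{n,T} = Σ_{i=1}^{T} Σ_{j=1}^{T} C^T_{ij} f_{j−1} g_{i−1}, where C^T_{ij} = Σ_{k=0}^{T−max(i,j)} r_{|i−j|+2k}. -/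
/-- The delta control: `δ_0 = 1`, `δ_t = 0` for `t ≥ 1`. -/
noncomputable def delta : ℕ → ℝ := fun t => if t = 0 then 1 else 0

/-- The response vector of the potential `b`: `r_s = u^δ_{1,s+1}`. -/
noncomputable def resp (b : ℕ → ℝ) (s : ℕ) : ℝ := sol b delta (s + 1) 1

/-- The entries of the connecting matrix: `Cmat r T i j = Σ_{k=0}^{T - max i j} r_{|i-j| + 2k}`
(`i`, `j` are 1-based indices). -/
noncomputable def Cmat (r : ℕ → ℝ) (T i j : ℕ) : ℝ :=
  ∑ k ∈ Finset.range (T - max i j + 1), r (max i j - min i j + 2 * k)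

/-!
Duhamel's principle writes `u^f_{n,T}` as the convolution `Σ_s f_s u^δ_{n,T-s}`, so the connecting
form is `Σ_{s,s'} f_s g_{s'} B(T-s, T-s')` with `B(p,q) = Σ_n u^δ_{n,p} u^δ_{n,q}`. Summation by
parts in `n` (Green's formula for the discrete Schrödinger operator) shows that `B` satisfies the
discrete wave equation `B(p+1,q) + B(p-1,q) = B(p,q+1) + B(p,q-1)`, which the closed form
`Σ_{k=1}^{min p q} r_{p+q-2k}` satisfies as well. Both vanish at `p = 0` and equal `r_{q-1}`
at `p = 1`, since `u^δ_{n,1}` is the unit vector at `n = 1`; hence they agree, and after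
reindexing the closed form is `C^T`.
-/

open Finset

section Solution

variable (b f : ℕ → ℝ)

@[simp] lemma sol_zero_right (t : ℕ) : sol b f t 0 = f t := by
  rcases t with _ | _ | t <;> rfl

@[simp] lemma sol_zero_add_one (n : ℕ) : sol b f 0 (n + 1) = 0 := rfl

@[simp] lemma sol_one_add_one (n : ℕ) : sol b f 1 (n + 1) = if n = 0 then f 0 else 0 := by
  rcases n with _ | n <;> simp [sol]

lemma sol_add_two_add_one (t n : ℕ) :
    sol b f (t + 2) (n + 1) = sol b f (t + 1) (n + 2) + sol b f (t + 1) n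
      - b (n + 1) * sol b f (t + 1) (n + 1) - sol b f t (n + 1) := by
  simp [sol]

lemma sol_eq_zero_of_lt {t n : ℕ} (h : t < n) : sol b f t n = 0 := by
  induction t using Nat.strong_induction_on generalizing n with
  | _ t ih =>
    obtain ⟨n, rfl⟩ := Nat.exists_eq_add_of_lt h
    rcases t with _ | _ | t
    · simp
    · simp
    · rw [sol_add_two_add_one, ih (t + 1) (by omega) (by omega), ih (t + 1) (by omega) (by omega),
        ih (t + 1) (by omega) (by omega), ih t (by omega) (by omega)]
      ring

end Solution

lemma sum_antidiagonal_mul_delta (f : ℕ → ℝ) (t : ℕ) :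
    ∑ ij ∈ antidiagonal t, f ij.1 * delta ij.2 = f t := by
  rcases t with _ | t <;> simp [Nat.sum_antidiagonal_succ', delta]

lemma sol_eq_sum_antidiagonal (b f : ℕ → ℝ) (t n : ℕ) :
    sol b f t n = ∑ ij ∈ antidiagonal t, f ij.1 * sol b delta ij.2 n := by
  induction t using Nat.strong_induction_on generalizing n with
  | _ t ih =>
    rcases n with _ | n
    · simp only [sol_zero_right, sum_antidiagonal_mul_delta]
    rcases t with _ | _ | t
    · simp
    · simp [Nat.sum_antidiagonal_succ', delta]
    · rw [sol_add_two_add_one, ih (t + 1) (by omega), ih (t + 1) (by omega), ih (t + 1) (by omega),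
        ih t (by omega)]
      simp only [Nat.sum_antidiagonal_succ', sol_add_two_add_one, mul_add, mul_sub, sum_add_distrib,
        sum_sub_distrib, mul_sum]
      rcases n with _ | n
      · simp only [zero_add, sol_zero_add_one, mul_zero, sol_zero_right, delta, ↓reduceIte,
          mul_one, Nat.add_eq_zero_iff, one_ne_zero, and_false, sum_const_zero, add_zero,
          mul_left_comm, sol_one_add_one]
        ring
      · simp [mul_left_comm]

lemma sol_eq_sum_range_of_eq_zero (b f : ℕ → ℝ) {T : ℕ} (hT : f T = 0) (n : ℕ) :
    sol b f T n = ∑ s ∈ range T, f s * sol b delta (T - s) n := by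
  rw [sol_eq_sum_antidiagonal,
    Nat.sum_antidiagonal_eq_sum_range_succ (fun i j => f i * sol b delta j n), sum_range_succ, hT,
    zero_mul, add_zero]

/-- Summation by parts in `n`: the boundary term at `n = 0` vanishes because
`δ_{p+1} = δ_{q+1} = 0`, the one at `n = M` by finite speed of propagation. -/
lemma sum_sol_delta_add_two_add_mul (b : ℕ → ℝ) {p M : ℕ} (hpM : p + 1 < M) (q : ℕ) :
    ∑ n ∈ range M, (sol b delta (p + 2) (n + 1) + sol b delta p (n + 1)) *
        sol b delta (q + 1) (n + 1) =
      ∑ n ∈ range M, sol b delta (p + 1) (n + 1) *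
        (sol b delta (q + 2) (n + 1) + sol b delta q (n + 1)) := by
  set W := sol b delta
  set A : ℕ → ℝ := fun n => W (p + 1) (n + 1) * W (q + 1) n - W (p + 1) n * W (q + 1) (n + 1)
  have hA0 : A 0 = 0 := by simp [A, W, delta]
  have hAM : A M = 0 := by
    simp [A, W, sol_eq_zero_of_lt b delta (show p + 1 < M + 1 by omega),
      sol_eq_zero_of_lt b delta hpM]
  rw [← sub_eq_zero, ← sum_sub_distrib]
  calc ∑ n ∈ range M, ((W (p + 2) (n + 1) + W p (n + 1)) * W (q + 1) (n + 1) -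
        W (p + 1) (n + 1) * (W (q + 2) (n + 1) + W q (n + 1)))
      = ∑ n ∈ range M, (A (n + 1) - A n) := by
        refine sum_congr rfl fun n _ => ?_
        simp only [A, W, sol_add_two_add_one]
        ring
    _ = 0 := by rw [sum_range_sub, hA0, hAM, sub_zero]

/-- `respGram r p q = Σ_{k=1}^{min p q} r_{p+q-2k}`; the subtraction never truncates. -/
noncomputable def respGram (r : ℕ → ℝ) (p q : ℕ) : ℝ :=
  ∑ k ∈ range (min p q), r (p + q - 2 * (k + 1))

lemma respGram_add_two_add_one (r : ℕ → ℝ) (p q : ℕ) :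
    respGram r (p + 2) (q + 1) =
      respGram r (p + 1) (q + 2) + respGram r (p + 1) q - respGram r p (q + 1) := by
  have ha : min (p + 2) (q + 1) = min (p + 1) q + 1 := by omega
  have hc : min (p + 1) (q + 2) = min p (q + 1) + 1 := by omega
  simp only [respGram, ha, hc, sum_range_succ']
  have hpq : p + 2 + (q + 1) = p + 1 + (q + 2) := by omega
  have hpq' : p + (q + 1) = p + 1 + q := by omega
  have hshift : ∀ k, p + 1 + (q + 2) - 2 * (k + 1 + 1) = p + 1 + q - 2 * (k + 1) := by omega
  simp only [hpq, hpq', hshift]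
  ring

lemma sum_sol_delta_mul_sol_delta (b : ℕ → ℝ) {p M : ℕ} (hpM : p ≤ M) (q : ℕ) :
    ∑ n ∈ range M, sol b delta p (n + 1) * sol b delta q (n + 1) = respGram (resp b) p q := by
  induction p using Nat.strong_induction_on generalizing q with
  | _ p ih =>
    rcases p with _ | _ | p
    · simp [respGram]
    · obtain ⟨M, rfl⟩ := Nat.exists_eq_add_of_le' hpM
      rcases q with _ | q
      · simp [respGram]
      · have hr : 1 + (q + 1) - 2 = q := by omega
        simp [respGram, resp, hr, delta]
    · rcases q with _ | q
      · simp [respGram]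
      · have hgreen := sum_sol_delta_add_two_add_mul b (p := p) (by omega : p + 1 < M) q
        simp only [add_mul, mul_add, sum_add_distrib, ih (p + 1) (by omega) (by omega),
          ih p (by omega) (by omega)] at hgreen
        rw [respGram_add_two_add_one]
        linarith

lemma Cmat_add_one_add_one (r : ℕ → ℝ) {T i j : ℕ} (hi : i < T) (hj : j < T) :
    Cmat r T (i + 1) (j + 1) = respGram r (T - j) (T - i) := by
  have hmin : min (T - j) (T - i) = T - max (i + 1) (j + 1) + 1 := by omega
  rw [respGram, hmin, Cmat, ← sum_range_reflect]
  refine sum_congr rfl fun k hk => ?_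
  rw [mem_range] at hk
  congr 1
  omega

lemma sum_Icc_one_eq_sum_range {M : Type*} [AddCommMonoid M] (f : ℕ → M) (T : ℕ) :
    ∑ i ∈ Icc 1 T, f i = ∑ i ∈ range T, f (i + 1) := by
  rw [← Ico_add_one_right_eq_Icc, sum_Ico_eq_sum_range, Nat.add_sub_cancel]
  simp only [add_comm]

theorem connecting_operator_representation_general (b : ℕ → ℝ) (T : ℕ) (f g : ℕ → ℝ)
    (hf : ∀ t, T ≤ t → f t = 0) (hg : ∀ t, T ≤ t → g t = 0) :
    ∑ n ∈ Finset.Icc 1 T, sol b f T n * sol b g T n =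
      ∑ i ∈ Finset.Icc 1 T, ∑ j ∈ Finset.Icc 1 T,
        Cmat (resp b) T i j * f (j - 1) * g (i - 1) := by
  simp only [sum_Icc_one_eq_sum_range, Nat.add_sub_cancel,
    sol_eq_sum_range_of_eq_zero b f (hf T le_rfl), sol_eq_sum_range_of_eq_zero b g (hg T le_rfl),
    sum_mul_sum]
  rw [sum_comm]
  conv_rhs => rw [sum_comm]
  refine sum_congr rfl fun j hj => ?_
  rw [sum_comm]
  refine sum_congr rfl fun i hi => ?_
  rw [mem_range] at hi hj
  rw [Cmat_add_one_add_one _ hi hj, ← sum_sol_delta_mul_sol_delta b (Nat.sub_le T j), sum_mul,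
    sum_mul]
  exact sum_congr rfl fun n _ => by ring

/-- Representation of the connecting form in terms of the response vector. -/
theorem connecting_operator_representation (b : ℕ → ℝ) (T : ℕ) (hT : 1 ≤ T) (f g : ℕ → ℝ)
    (hf : ∀ t, T ≤ t → f t = 0) (hg : ∀ t, T ≤ t → g t = 0) :
    ∑ n ∈ Finset.Icc 1 T, sol b f T n * sol b g T n =
      ∑ i ∈ Finset.Icc 1 T, ∑ j ∈ Finset.Icc 1 T,
        Cmat (resp b) T i j * f (j - 1) * g (i - 1) :=
  connecting_operator_representation_general b T f g hf hg
end

section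
/- Let T ≥ 3 and let r : ℕ → ℝ be any sequence with r_0 = 1, and define the T×T matrix C^T by C^T_{ij} = Σ_{k=0}^{T−max(i,j)} r_{|i−j|+2k} for 1 ≤ i, j ≤ T. Then C^T_{i,j+1} + C^T_{i,j−1} − C^T_{i+1,j} − C^T_{i−1,j} = 0 for all 2 ≤ i ≤ T−1 and 2 ≤ j ≤ T−1, and the boundary values are C^T_{i,T} = r_{T−i} and C^T_{T,j} = r_{T−j} for all 1 ≤ i, j ≤ T. -/
lemma Cmat_comm (r : ℕ → ℝ) (T i j : ℕ) : Cmat r T i j = Cmat r T j i := by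
  simp [Cmat, max_comm, min_comm]

lemma Cmat_of_le (r : ℕ → ℝ) (T i j : ℕ) (h : i ≤ j) :
    Cmat r T i j = ∑ k ∈ Finset.range (T - j + 1), r (j - i + 2 * k) := by
  simp [Cmat, max_eq_right h, min_eq_left h]

lemma Cmat_step (r : ℕ → ℝ) (T d m : ℕ) (h : m < T) :
    ∑ k ∈ Finset.range (T - m + 1), r (d + 2 * k)
      = (∑ k ∈ Finset.range (T - (m + 1) + 1), r (d + 2 * k)) + r (d + 2 * (T - m)) := by
  have h1 : T - (m + 1) + 1 = T - m := by omega
  rw [h1, ← Finset.sum_range_succ]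

lemma wave_lt (r : ℕ → ℝ) (T i j : ℕ) (hT : 3 ≤ T) (hi : 2 ≤ i) (hij : i < j)
    (hj : j ≤ T - 1) :
    Cmat r T i (j + 1) + Cmat r T i (j - 1) - Cmat r T (i + 1) j - Cmat r T (i - 1) j = 0 := by
  have hjT : j < T := by omega
  rw [Cmat_of_le r T i (j + 1) (by omega), Cmat_of_le r T i (j - 1) (by omega),
    Cmat_of_le r T (i + 1) j (by omega), Cmat_of_le r T (i - 1) j (by omega)]
  have hD := Cmat_step r T (j - (i - 1)) j hjT
  have hB := Cmat_step r T (j - 1 - i) (j - 1) (by omega)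
  have e1 : j - (i - 1) = j + 1 - i := by omega
  have e3 : j - 1 + 1 = j := by omega
  rw [e1] at hD
  rw [e3] at hB
  rw [e1, hD, hB]
  have e2 : j - 1 - i = j - (i + 1) := by omega
  have e4 : j + 1 - i + 2 * (T - j) = j - 1 - i + 2 * (T - (j - 1)) := by omega
  rw [e4, e2]
  ring

/-- The kernel of `C^T` satisfies a discrete wave equation with boundary data given by `r`. -/
theorem connecting_kernel_equation (T : ℕ) (hT : 3 ≤ T) (r : ℕ → ℝ) (hr0 : r 0 = 1) :
    (∀ i j, 2 ≤ i → i ≤ T - 1 → 2 ≤ j → j ≤ T - 1 →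
      Cmat r T i (j + 1) + Cmat r T i (j - 1) - Cmat r T (i + 1) j - Cmat r T (i - 1) j = 0) ∧
    (∀ i, 1 ≤ i → i ≤ T → Cmat r T i T = r (T - i)) ∧
    (∀ j, 1 ≤ j → j ≤ T → Cmat r T T j = r (T - j)) := by
  refine ⟨?_, ?_, ?_⟩
  · intro i j hi2 hiT hj2 hjT
    rcases lt_trichotomy i j with h | h | h
    · exact wave_lt r T i j hT hi2 h hjT
    · subst h
      rw [Cmat_comm r T (i + 1) i, Cmat_comm r T (i - 1) i]
      ring
    · have := wave_lt r T j i hT hj2 h hiT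
      rw [Cmat_comm r T i (j + 1), Cmat_comm r T i (j - 1),
        Cmat_comm r T (i + 1) j, Cmat_comm r T (i - 1) j]
      linarith
  · intro i h1 h2
    rw [Cmat_of_le r T i T h2]
    have : T - T + 1 = 1 := by omega
    rw [this]
    simp
  · intro j h1 h2
    rw [Cmat_comm, Cmat_of_le r T j T h2]
    have : T - T + 1 = 1 := by omega
    rw [this]
    simp
end
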